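/- arXiv:math/0601012 — 2 statements merged into one kernel-verified Lean document; each statement's English description precedes it below -/
import Mathlib

section
/- Let N ≥ 1 and t be integers, let 1̄ denote the class of 1 in ℤ/Nℤ, and let m be a natural number. Then ∏_{k=0}^{m−1} ω_t(1̄, k̄, 1̄) = exp( 2πi·t·⌊m/N⌋ / N ), where k̄ denotes the class of k in ℤ/Nℤ and ⌊m/N⌋ is the integer part of m/N. -/
/-!
Write `ω_t(a, b, c) = exp(2πi t/N² · â · carry(b, c))` with `carry(b, c) = b̂ + ĉ − (b+c)^`.
For `a = c = 1̄` the carries telescope along `k = 0, …, m − 1`, so their sum is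
`m · 1̂ − m̂`, which for `N ≥ 2` is `m − (m mod N) = N ⌊m/N⌋`. The cases `N = 0` (zero exponent)
and `N = 1` (where `1̂ = 0` and the right side is `exp(2πi t m) = 1`) are degenerate.
-/

open Finset

/-- The standard 3-cochain `ω_t` on `ℤ/Nℤ` with values in `ℂ`. -/
noncomputable def omegaCocycle (N : ℕ) (t : ℤ) (a b c : ZMod N) : ℂ :=
  Complex.exp ((2 * (Real.pi : ℂ) * Complex.I * (t : ℂ) / ((N : ℂ) ^ 2)) *
    ((a.val : ℂ) * ((((b.val : ℤ) + (c.val : ℤ) - ((b + c).val : ℤ)) : ℤ) : ℂ)))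

namespace ZMod

def carry {N : ℕ} (b c : ZMod N) : ℤ := b.val + c.val - (b + c).val

theorem sum_range_carry_one (N m : ℕ) :
    ∑ k ∈ range m, carry (k : ZMod N) 1 = m * (1 : ZMod N).val - (m : ZMod N).val := by
  have hstep (k : ℕ) : carry (k : ZMod N) 1
      = (1 : ZMod N).val - ((((k + 1 : ℕ) : ZMod N).val : ℤ) - ((k : ZMod N).val : ℤ)) := by
    rw [carry, Nat.cast_succ]
    ring
  rw [sum_congr rfl fun k _ => hstep k, sum_sub_distrib,
    sum_range_sub (fun k : ℕ => (((k : ℕ) : ZMod N).val : ℤ))]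
  simp

theorem sum_range_carry_one_of_one_lt {N : ℕ} (hN : 1 < N) (m : ℕ) :
    ∑ k ∈ range m, carry (k : ZMod N) 1 = N * (m / N : ℕ) := by
  rw [sum_range_carry_one, val_natCast, val_one_eq_one_mod, Nat.mod_eq_of_lt hN]
  push_cast
  rw [Int.emod_def]
  ring

end ZMod

theorem omegaCocycle_eq_exp_mul_carry (N : ℕ) (t : ℤ) (a b c : ZMod N) :
    omegaCocycle N t a b c
      = Complex.exp (2 * Real.pi * Complex.I * t / (N : ℂ) ^ 2 * (a.val * ZMod.carry b c)) :=
  rfl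

theorem omegaCocycle_prod_general (N : ℕ) (t : ℤ) (m : ℕ) :
    ∏ k ∈ Finset.range m, omegaCocycle N t 1 (k : ZMod N) 1 =
      Complex.exp (2 * (Real.pi : ℂ) * Complex.I * (t : ℂ) * ((m / N : ℕ) : ℂ) / (N : ℂ)) := by
  have hprod : ∏ k ∈ range m, omegaCocycle N t 1 (k : ZMod N) 1
      = Complex.exp (2 * Real.pi * Complex.I * t / (N : ℂ) ^ 2 *
          ((1 : ZMod N).val * ((∑ k ∈ range m, ZMod.carry (k : ZMod N) 1 : ℤ) : ℂ))) := by
    simp only [omegaCocycle_eq_exp_mul_carry, Complex.exp_sum, Int.cast_sum, mul_sum]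
  rw [hprod]
  rcases N with _ | _ | N
  · simp
  · have hexponent : 2 * Real.pi * Complex.I * t * ((m / 1 : ℕ) : ℂ) / ((0 + 1 : ℕ) : ℂ)
        = ((t * m : ℤ) : ℂ) * (2 * Real.pi * Complex.I) := by
      push_cast
      rw [Nat.div_one]
      ring
    rw [hexponent, Complex.exp_int_mul_two_pi_mul_I, ZMod.val_one_eq_one_mod]
    simp
  · have : Fact (1 < N + 2) := ⟨by omega⟩
    rw [ZMod.sum_range_carry_one_of_one_lt (by omega), ZMod.val_one]
    congr 1
    simp only [Int.cast_mul, Int.cast_natCast, Nat.cast_one]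
    field_simp

theorem omegaCocycle_prod (N : ℕ) (hN : 1 ≤ N) (t : ℤ) (m : ℕ) :
    ∏ k ∈ Finset.range m, omegaCocycle N t 1 (k : ZMod N) 1 =
      Complex.exp (2 * (Real.pi : ℂ) * Complex.I * (t : ℂ) * ((m / N : ℕ) : ℂ) / (N : ℂ)) :=
  omegaCocycle_prod_general N t m
end

section
/- Let p be a prime number, V a finite-dimensional complex vector space, and f : V → V a ℂ-linear map with f^p = id. If the trace of f is an integer, i.e. Tr(f) = (m : ℂ) for some integer m, then m ≡ dim_ℂ V (mod p). -/
/-!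
Over `ℂ`, `Tr f` is the sum of the `dim V` roots of the characteristic polynomial, and each of
them is a `p`-th root of unity, hence a power of a fixed primitive root `ζ`. So `Tr f = P(ζ)` for
an integer polynomial `P` with `P(1) = dim V`. As `P - m` vanishes at `ζ`, the cyclotomic
polynomial `Φ_p` divides it, and evaluating at `1` gives `p = Φ_p(1) ∣ dim V - m`.
-/

open Polynomial

namespace IsPrimitiveRoot

variable {K : Type*} [Field K] {ζ : K}

theorem exists_aeval_eq_sum_and_eval_one_eq_card {n : ℕ} [NeZero n] (hζ : IsPrimitiveRoot ζ n)
    (s : Multiset K) (hs : ∀ x ∈ s, x ^ n = 1) :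
    ∃ P : ℤ[X], aeval ζ P = s.sum ∧ P.eval 1 = s.card := by
  induction s using Multiset.induction_on with
  | empty => exact ⟨0, by simp, by simp⟩
  | cons x s ih =>
    obtain ⟨P, hPζ, hP1⟩ := ih fun y hy ↦ hs y (Multiset.mem_cons_of_mem hy)
    obtain ⟨i, -, rfl⟩ := hζ.eq_pow_of_pow_eq_one (hs x (Multiset.mem_cons_self x s))
    exact ⟨X ^ i + P, by simp [hPζ], by simp [hP1, add_comm]⟩

variable [CharZero K]

theorem eval_one_modEq_of_aeval_eq_intCast {p : ℕ} (hp : p.Prime) (hζ : IsPrimitiveRoot ζ p)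
    {P : ℤ[X]} {m : ℤ} (h : aeval ζ P = m) : P.eval 1 ≡ m [ZMOD p] := by
  have : Fact p.Prime := ⟨hp⟩
  have hdvd : cyclotomic p ℤ ∣ P - C m := by
    rw [cyclotomic_eq_minpoly hζ hp.pos]
    exact minpoly.isIntegrallyClosed_dvd (hζ.isIntegral hp.pos) (by simp [h])
  obtain ⟨Q, hQ⟩ := hdvd
  have hQ1 := congrArg (eval 1) hQ
  rw [eval_mul, eval_one_cyclotomic_prime, eval_sub, eval_C] at hQ1
  exact (Int.modEq_iff_dvd.mpr ⟨Q.eval 1, hQ1⟩).symm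

theorem intCast_modEq_card_of_sum_eq {p : ℕ} (hp : p.Prime) (hζ : IsPrimitiveRoot ζ p)
    (s : Multiset K) (hs : ∀ x ∈ s, x ^ p = 1) {m : ℤ} (hm : s.sum = m) :
    m ≡ s.card [ZMOD p] := by
  have : NeZero p := ⟨hp.ne_zero⟩
  obtain ⟨P, hPζ, hP1⟩ := hζ.exists_aeval_eq_sum_and_eval_one_eq_card s hs
  rw [← hP1]
  exact (hζ.eval_one_modEq_of_aeval_eq_intCast hp (hPζ.trans hm)).symm

end IsPrimitiveRoot

theorem Module.End.pow_eq_one_of_isRoot_charpoly {K V : Type*} [Field K] [AddCommGroup V]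
    [Module K V] [FiniteDimensional K V] {f : Module.End K V} {n : ℕ} (hf : f ^ n = 1) {μ : K}
    (hμ : f.charpoly.IsRoot μ) : μ ^ n = 1 := by
  obtain ⟨v, hv⟩ := ((f.hasEigenvalue_iff_isRoot_charpoly μ).mpr hμ).exists_hasEigenvector
  have hfix : μ ^ n • v = (1 : K) • v := by rw [← hv.pow_apply, hf, one_smul, Module.End.one_apply]
  exact smul_left_injective K hv.2 hfix

theorem trace_int_congr_finrank (p : ℕ) (hp : p.Prime)
    (V : Type*) [AddCommGroup V] [Module ℂ V] [FiniteDimensional ℂ V]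
    (f : Module.End ℂ V) (hf : f ^ p = 1)
    (m : ℤ) (hm : LinearMap.trace ℂ V f = (m : ℂ)) :
    m ≡ (Module.finrank ℂ V : ℤ) [ZMOD (p : ℤ)] := by
  have hsplit : f.charpoly.Splits := IsAlgClosed.splits _
  have hcard : f.charpoly.roots.card = Module.finrank ℂ V := by
    rw [splits_iff_card_roots.mp hsplit, f.charpoly_natDegree]
  rw [← hcard]
  refine (Complex.isPrimitiveRoot_exp p hp.ne_zero).intCast_modEq_card_of_sum_eq hp _
    (fun μ hμ ↦ Module.End.pow_eq_one_of_isRoot_charpoly hf (isRoot_of_mem_roots hμ)) ?_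
  rw [← Module.End.trace_eq_sum_roots_charpoly_of_splits hsplit, hm]
end
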